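/- arXiv:2311.15905 — 3 statements merged into one kernel-verified Lean document; each statement's English description precedes it below -/
import Mathlib

section
/- If Λ is a commutative ring finitely generated as a ℤ-algebra and 𝔪 is a maximal ideal of Λ, then there is a unique prime number p such that p ∈ 𝔪 (i.e. the image of p in Λ lies in 𝔪). -/
/-!
The residue field `K = Λ ⧸ 𝔪` is a field of finite type over the Jacobson ring `ℤ`, hence a
finite `ℤ`-module and so integral over `ℤ`. A field integral over `ℤ` cannot contain `ℤ`, since
`ℤ` is not a field; so `K` has prime characteristic `p`, and for a prime `q`
we have `q ∈ 𝔪 ↔ (q : K) = 0 ↔ p ∣ q ↔ q = p`.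
-/

theorem isJacobsonRing_of_jacobson_bot {R : Type*} [CommRing R] [Ring.DimensionLEOne R]
    (h : (⊥ : Ideal R).jacobson = ⊥) : IsJacobsonRing R := by
  refine isJacobsonRing_iff_prime_eq.mpr fun {P} hP => ?_
  rcases eq_or_ne P ⊥ with rfl | hP_ne
  · exact h
  · have : P.IsMaximal := Ring.DimensionLEOne.maximalOfPrime hP_ne hP
    exact Ideal.jacobson_eq_self_of_isMaximal

theorem Int.jacobson_bot : (⊥ : Ideal ℤ).jacobson = ⊥ := by
  refine le_bot_iff.mp fun x hx => ?_
  -- `x ^ 2 + 1` is a unit, hence equal to `1`.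
  have hunit := Int.isUnit_iff.mp (Ideal.mem_jacobson_bot.mp hx x)
  rw [Ideal.mem_bot]
  rcases hunit with h | h <;> nlinarith [mul_self_nonneg x]

instance Int.isJacobsonRing : IsJacobsonRing ℤ :=
  isJacobsonRing_of_jacobson_bot Int.jacobson_bot

theorem ringChar_ne_zero_of_finiteType_int (K : Type*) [Field K] [Algebra ℤ K]
    [Algebra.FiniteType ℤ K] : ringChar K ≠ 0 := by
  intro h
  have : CharZero K := (CharP.charP_zero_iff_charZero K).mp (ringChar.eq_iff.mp h)
  have := finite_of_finite_type_of_isJacobsonRing ℤ K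
  have hinj : Function.Injective (algebraMap ℤ K) := (algebraMap ℤ K).injective_int
  exact Int.not_isField ((Algebra.IsIntegral.isField_iff_isField hinj).mpr (Field.toIsField K))

theorem Nat.Prime.eq_of_charP {R : Type*} [NonAssocSemiring R] {p q : ℕ} [CharP R p]
    (hp : p.Prime) (hq : q.Prime) (hq_zero : (q : R) = 0) : q = p :=
  ((Nat.prime_dvd_prime_iff_eq hp hq).mp ((CharP.cast_eq_zero_iff R p q).mp hq_zero)).symm

theorem existsUnique_prime_natCast_eq_zero_of_finiteType_int (K : Type*) [Field K]
    [Algebra ℤ K] [Algebra.FiniteType ℤ K] : ∃! p : ℕ, p.Prime ∧ (p : K) = 0 := by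
  have : NeZero (ringChar K) := ⟨ringChar_ne_zero_of_finiteType_int K⟩
  have hp : (ringChar K).Prime := (CharP.char_is_prime_of_pos K (ringChar K)).out
  exact ⟨ringChar K, ⟨hp, ringChar.Nat.cast_ringChar⟩,
    fun q ⟨hq, hq_zero⟩ => hp.eq_of_charP hq hq_zero⟩

/-- If `Λ` is a finitely generated `ℤ`-algebra and `𝔪` a maximal ideal, there is a
unique prime number `p` with `p ∈ 𝔪`. -/
theorem stmt_4 (Λ : Type*) [CommRing Λ] [Algebra.FiniteType ℤ Λ]
    (𝔪 : Ideal Λ) [𝔪.IsMaximal] :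
    ∃! p : ℕ, p.Prime ∧ (p : Λ) ∈ 𝔪 := by
  let := Ideal.Quotient.field 𝔪
  have : Algebra.FiniteType ℤ (Λ ⧸ 𝔪) :=
    .of_surjective (Ideal.Quotient.mkₐ ℤ 𝔪) Ideal.Quotient.mk_surjective
  have hmem (n : ℕ) : (n : Λ) ∈ 𝔪 ↔ (n : Λ ⧸ 𝔪) = 0 := by
    rw [← map_natCast (Ideal.Quotient.mk 𝔪), Ideal.Quotient.eq_zero_iff_mem]
  simpa only [hmem] using existsUnique_prime_natCast_eq_zero_of_finiteType_int (Λ ⧸ 𝔪)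
end

section
/- For every nonzero rational number x, the product of the real absolute value |x|_∞ with the p-adic absolute values |x|_p over all primes p equals 1 (the product formula: Π_v |x|_v = 1, where all but finitely many factors equal 1). -/
open Function

def stmt8Finset (n : ℕ) : Finset Nat.Primes :=
  n.primeFactors.attach.map
    { toFun := fun q : {x // x ∈ n.primeFactors} =>
        (⟨q.1, Nat.prime_of_mem_primeFactors q.2⟩ : Nat.Primes)
      inj' := fun _ _ h => Subtype.ext (congrArg (fun q : Nat.Primes => (q : ℕ)) h) }

lemma mem_stmt8Finset {n : ℕ} {p : Nat.Primes} (h : (p : ℕ) ∈ n.primeFactors) :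
    p ∈ stmt8Finset n := by
  rw [stmt8Finset, Finset.mem_map]
  exact ⟨⟨(p : ℕ), h⟩, Finset.mem_attach _ _, Subtype.ext rfl⟩

lemma stmt8_prod (n : ℕ) :
    ∏ p ∈ stmt8Finset n, padicNorm (p : ℕ) (n : ℚ)
      = ∏ q ∈ n.primeFactors, padicNorm q (n : ℚ) := by
  rw [stmt8Finset, Finset.prod_map]
  exact Finset.prod_attach n.primeFactors (fun q => padicNorm q (n : ℚ))

lemma stmt_8_supp (n : ℕ) (hn : n ≠ 0) :
    mulSupport (fun p : Nat.Primes => padicNorm p (n : ℚ)) ⊆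
      fun p => (p : ℕ) ∈ n.primeFactors := by
  intro p hp
  have : Fact (p : ℕ).Prime := ⟨p.2⟩
  rw [mem_mulSupport] at hp
  rw [Ne, padicNorm.nat_eq_one_iff, not_not] at hp
  exact Nat.mem_primeFactors.2 ⟨p.2, hp, hn⟩

lemma stmt_8_nat (n : ℕ) (hn : n ≠ 0) :
    (mulSupport fun p : Nat.Primes => padicNorm p (n : ℚ)).Finite ∧
    ∏ᶠ p : Nat.Primes, padicNorm p (n : ℚ) = (n : ℚ)⁻¹ := by
  have hsub := stmt_8_supp n hn
  have hfin : (mulSupport fun p : Nat.Primes => padicNorm p (n : ℚ)).Finite := by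
    apply Set.Finite.subset _ hsub
    exact (n.primeFactors.finite_toSet.preimage (Subtype.val_injective.injOn))
  refine ⟨hfin, ?_⟩
  have hset : mulSupport (fun p : Nat.Primes => padicNorm p (n : ℚ)) ⊆
      ↑(stmt8Finset n) := fun p hp => mem_stmt8Finset (hsub hp)
  rw [finprod_eq_prod_of_mulSupport_subset _ hset, stmt8_prod]
  have h2 : ∀ q ∈ n.primeFactors, padicNorm q (n : ℚ) = ((q : ℚ) ^ n.factorization q)⁻¹ := by
    intro q hq
    have hq' : q.Prime := Nat.prime_of_mem_primeFactors hq
    have : Fact q.Prime := ⟨hq'⟩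
    rw [padicNorm.eq_zpow_of_nonzero (by exact_mod_cast hn)]
    rw [padicValRat.of_nat, Nat.factorization_def n hq']
    rw [zpow_neg, zpow_natCast]
  rw [Finset.prod_congr rfl h2, Finset.prod_inv_distrib]
  congr 1
  have := Nat.factorization_prod_pow_eq_self hn
  calc ∏ q ∈ n.primeFactors, (q : ℚ) ^ n.factorization q
      = ((∏ q ∈ n.primeFactors, q ^ n.factorization q : ℕ) : ℚ) := by push_cast; ring
    _ = (n : ℚ) := by
        rw [← Nat.support_factorization]
        exact_mod_cast congrArg (Nat.cast (R := ℚ)) this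

/-- The product formula for `ℚ`: for `x ≠ 0`,
`|x|_∞ · ∏_p |x|_p = 1`, all but finitely many factors being `1`. -/
theorem stmt_8 (x : ℚ) (hx : x ≠ 0) :
    {p : Nat.Primes | padicNorm p x ≠ 1}.Finite ∧
    |x| * ∏ᶠ p : Nat.Primes, padicNorm p x = 1 := by
  have hm : (x.num.natAbs : ℚ) ≠ 0 := by
    simp [Rat.num_ne_zero.2 hx]
  have hd : (x.den : ℚ) ≠ 0 := by exact_mod_cast x.den_nz
  obtain ⟨hf1, he1⟩ := stmt_8_nat x.num.natAbs (by simpa using Rat.num_ne_zero.2 hx)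
  obtain ⟨hf2, he2⟩ := stmt_8_nat x.den x.den_nz
  have hdenpos : (0 : ℚ) < x.den := by exact_mod_cast x.pos
  have habs : |x| = (x.num.natAbs : ℚ) / (x.den : ℚ) := by
    conv_lhs => rw [← Rat.num_div_den x]
    rw [abs_div, abs_of_pos hdenpos, Nat.cast_natAbs, Int.cast_abs]
  have hnorm : ∀ p : Nat.Primes, padicNorm p x
      = padicNorm p (x.num.natAbs : ℚ) / padicNorm p (x.den : ℚ) := by
    intro p
    have : Fact (p : ℕ).Prime := ⟨p.2⟩
    conv_lhs => rw [← Rat.num_div_den x]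
    rw [padicNorm.div]
    congr 1
    rw [Nat.cast_natAbs, Int.cast_abs]
    rcases abs_cases ((x.num : ℚ)) with ⟨h, _⟩ | ⟨h, _⟩
    · rw [h]
    · rw [h, padicNorm.neg]
  constructor
  · apply Set.Finite.subset (hf1.union hf2)
    intro p hp
    simp only [Set.mem_setOf_eq, hnorm p] at hp
    by_contra hc
    simp only [Set.mem_union, mem_mulSupport, not_or, not_not] at hc
    rw [hc.1, hc.2] at hp
    simp at hp
  · have heq : (fun p : Nat.Primes => padicNorm p x)
        = fun p : Nat.Primes => padicNorm p (x.num.natAbs : ℚ) / padicNorm p (x.den : ℚ) :=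
      funext hnorm
    rw [heq, finprod_div_distrib hf1 hf2, he1, he2, habs]
    field_simp
end

section
/- Let K be a field of characteristic zero, V a finite-dimensional K-vector space, φ : V → V an invertible linear map, N : V → V a linear map, and p a prime number (viewed in K). If N∘φ = p·(φ∘N), then N is nilpotent. -/
open Polynomial

private lemma aux_coeff_aeval_C_mul_X {K : Type*} [CommRing K] (f : K[X]) (c : K) (i : ℕ) :
    (aeval (C c * X) f).coeff i = c ^ i * f.coeff i := by
  induction f using Polynomial.induction_on' with
  | add p q hp hq => simp [hp, hq, mul_add]
  | monomial k a =>
      have h1 : aeval (C c * X) (monomial k a) = C (a * c ^ k) * X ^ k := by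
        rw [aeval_monomial, mul_pow, ← C_pow, algebraMap_eq, ← mul_assoc, ← C_mul]
      rw [h1, coeff_C_mul, coeff_X_pow, coeff_monomial]
      rcases eq_or_ne i k with rfl | hik
      · simp only [if_pos trivial, mul_one]; ring
      · simp [hik, Ne.symm hik]

private lemma aux_charpoly_smul {K : Type*} [CommRing K] {n : Type*} [Fintype n] [DecidableEq n]
    (M : Matrix n n K) (c : K) :
    aeval (C c * X) ((c • M).charpoly) = C (c ^ Fintype.card n) * M.charpoly := by
  have hmap : ((Matrix.charmatrix (c • M)).map (aeval (C c * X) : K[X] →ₐ[K] K[X])) =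
      (C c) • Matrix.charmatrix M := by
    refine Matrix.ext fun i j => ?_
    rcases eq_or_ne i j with rfl | hij
    · simp only [Matrix.map_apply, Matrix.charmatrix_apply_eq, Matrix.smul_apply, smul_eq_mul,
        map_sub, aeval_X, aeval_C, algebraMap_eq, C_mul, map_mul]
      ring
    · simp only [Matrix.map_apply, Matrix.charmatrix_apply_ne _ _ _ hij, Matrix.smul_apply,
        smul_eq_mul, map_neg, aeval_C, algebraMap_eq, C_mul, map_mul]
      ring
  rw [Matrix.charpoly, AlgHom.map_det, AlgHom.mapMatrix_apply, hmap, Matrix.det_smul,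
    Matrix.charpoly, ← C_pow]

/-- If `N φ = p · φ N` with `φ` invertible over a characteristic-zero field,
then the monodromy operator `N` is nilpotent. -/
theorem stmt_12 (K : Type*) [Field K] [CharZero K]
    (V : Type*) [AddCommGroup V] [Module K V] [FiniteDimensional K V]
    (φ N : V →ₗ[K] V) (hφ : Function.Bijective φ)
    (p : ℕ) (hp : p.Prime)
    (h : N ∘ₗ φ = (p : K) • (φ ∘ₗ N)) :
    IsNilpotent N := by
  classical
  set n := Module.finrank K V with hn
  -- N is conjugate to p • N
  let e : V ≃ₗ[K] V := LinearEquiv.ofBijective φ hφ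
  have hconj : e.conj ((p : K) • N) = N := by
    ext x
    have hx : φ (e.symm x) = x := e.apply_symm_apply x
    have := congrArg (fun f : V →ₗ[K] V => f (e.symm x)) h.symm
    simpa [LinearEquiv.conj_apply, e, hx] using this
  have hcp : ((p : K) • N).charpoly = N.charpoly := by
    conv_rhs => rw [← hconj]
    rw [LinearEquiv.charpoly_conj]
  -- the scaling identity for charpoly N
  have key : aeval (C (p : K) * X) (N.charpoly) = C ((p : K) ^ n) * N.charpoly := by
    let b := Module.finBasis K V
    have h1 := aux_charpoly_smul (LinearMap.toMatrix b b N) (p : K)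
    rw [← map_smul (LinearMap.toMatrix b b)] at h1
    rw [LinearMap.charpoly_toMatrix, LinearMap.charpoly_toMatrix, hcp] at h1
    simpa using h1
  -- coefficients below n vanish
  have hcoeff : ∀ i < n, N.charpoly.coeff i = 0 := by
    intro i hi
    have h2 := congrArg (fun f => f.coeff i) key
    simp only [aux_coeff_aeval_C_mul_X, coeff_C_mul] at h2
    have hne : ((p : K) ^ i : K) ≠ (p : K) ^ n := by
      intro hcontra
      rw [← Nat.cast_pow, ← Nat.cast_pow] at hcontra
      exact absurd (Nat.pow_right_injective hp.two_le (Nat.cast_injective hcontra))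
        hi.ne
    by_contra hne0
    exact hne (mul_right_cancel₀ hne0 h2)
  -- charpoly N = X ^ n
  have hX : N.charpoly = X ^ n := by
    have hmonic := LinearMap.charpoly_monic N
    have hdeg : N.charpoly.natDegree = n := LinearMap.charpoly_natDegree N
    ext i
    rcases lt_trichotomy i n with hi | rfl | hi
    · rw [hcoeff i hi, coeff_X_pow, if_neg hi.ne]
    · rw [coeff_X_pow, if_pos rfl, ← hdeg]
      exact hmonic.coeff_natDegree
    · rw [coeff_X_pow, if_neg hi.ne', Polynomial.coeff_eq_zero_of_natDegree_lt (hdeg ▸ hi)]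
  rw [LinearMap.isNilpotent_iff_charpoly]
  exact hX
end
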